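/- arXiv:2512.15496 — 2 statements merged into one kernel-verified Lean document; each statement's English description precedes it below -/
import Mathlib

section
/- Let M be a Kripke model and S a relation on its worlds satisfying (Sim_k) and the condition (Sim°⌣): if S w v and v R t, then either S v t, or both S v w and there exists s with w R s and S s t. Then for every formula φ of the language with ⊤, ⊥, ∧, ∨ and the consistency operator °⌣ (where w ⊩ °⌣φ iff w ⊮ φ or all R-successors of w satisfy φ), S w v and w ⊩ φ imply v ⊩ φ. -/
inductive Fm (K : Type) : Type
  | prop (k : K)
  | top
  | bot
  | and (a b : Fm K)
  | or (a b : Fm K)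
  | cons (a : Fm K)

def Sat {W K : Type} (R : W → W → Prop) (P : K → W → Prop) : W → Fm K → Prop
  | w, .prop k => P k w
  | _, .top => True
  | _, .bot => False
  | w, .and a b => Sat R P w a ∧ Sat R P w b
  | w, .or a b => Sat R P w a ∨ Sat R P w b
  | w, .cons a => ¬ Sat R P w a ∨ ∀ v, R w v → Sat R P v a

theorem stmt3 {W K : Type} (R : W → W → Prop) (P : K → W → Prop)
    (S : W → W → Prop)
    (hP : ∀ k w v, S w v → P k w → P k v)
    (hOp : ∀ w v t, S w v → R v t → (S v t ∨ (S v w ∧ ∃ s, R w s ∧ S s t))) :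
    ∀ (φ : Fm K) (w v : W), S w v → Sat R P w φ → Sat R P v φ := by
  intro φ
  induction φ with
  | prop k => intro w v hS h; exact hP k w v hS h
  | top => intro _ _ _ _; trivial
  | bot => intro _ _ _ h; exact h.elim
  | and a b iha ihb => intro w v hS h; exact ⟨iha w v hS h.1, ihb w v hS h.2⟩
  | or a b iha ihb =>
      intro w v hS h
      cases h with
      | inl h => exact Or.inl (iha w v hS h)
      | inr h => exact Or.inr (ihb w v hS h)
  | cons a ih =>
      intro w v hS h
      by_cases hv : Sat R P v a
      · right
        intro t hRt
        rcases hOp w v t hS hRt with hvt | ⟨hvw, s, hws, hst⟩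
        · exact ih v t hvt hv
        · have hw : Sat R P w a := ih v w hvw hv
          cases h with
          | inl h => exact absurd hw h
          | inr h => exact ih s t hst (h s hws)
      · left; exact hv
end

section
/- Failure of the simplified simulation condition: consider the {°⌣}-language and the Kripke model with worlds {w, v, t}, R = {(v,t)}, and P_k = {t} for every propositional letter index k. Then (1) every {°⌣}-formula true at w is true at v (w is subsumed by v); but (2) there is no relation S with S w v satisfying (Sim_k) and the strengthened condition (S°⌣'): if S w v and v R t then S v w and there exists s with w R s and S s t. -/
/-- Accessibility: the only arrow is from `v = 1` to `t = 2`. -/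
def R17 : Fin 3 → Fin 3 → Prop := fun a b => a = 1 ∧ b = 2

/-- Every propositional letter is true exactly at `t = 2`. -/
def P17 (K : Type) : K → Fin 3 → Prop := fun _ x => x = 2

lemma aux12 (K : Type) (φ : Fm K) (h : Sat R17 (P17 K) 1 φ) : Sat R17 (P17 K) 2 φ := by
  induction φ with
  | prop k => simp [Sat, P17] at h
  | top => trivial
  | bot => exact h
  | and a b iha ihb => exact ⟨iha h.1, ihb h.2⟩
  | or a b iha ihb => exact h.elim (fun h => .inl (iha h)) (fun h => .inr (ihb h))
  | cons a ih => exact .inr fun v hv => absurd hv.1 (by decide)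

theorem stmt17 (K : Type) :
    -- w = 0 is subsumed by v = 1:
    (∀ φ : Fm K, Sat R17 (P17 K) 0 φ → Sat R17 (P17 K) 1 φ) ∧
    -- but no relation S with S w v satisfies (Sim_k) together with the
    -- strengthened condition (S°⌣'):
    ¬ ∃ S : Fin 3 → Fin 3 → Prop,
        S 0 1 ∧
        (∀ (k : K) (w v : Fin 3), S w v → P17 K k w → P17 K k v) ∧
        (∀ w v t : Fin 3, S w v → R17 v t →
            (S v w ∧ ∃ s, R17 w s ∧ S s t)) := by
  constructor
  · intro φ
    induction φ with
    | prop k => intro h; simp [Sat, P17] at h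
    | top => intro _; trivial
    | bot => intro h; exact h.elim
    | and a b iha ihb => intro h; exact ⟨iha h.1, ihb h.2⟩
    | or a b iha ihb => intro h; exact h.elim (fun h => .inl (iha h)) (fun h => .inr (ihb h))
    | cons a ih =>
      intro _
      by_cases h1 : Sat R17 (P17 K) 1 a
      · exact .inr fun v hv => hv.2 ▸ aux12 K a h1
      · exact .inl h1
  · rintro ⟨S, hS01, _, hcond⟩
    obtain ⟨_, s, hRs, _⟩ := hcond 0 1 2 hS01 ⟨rfl, rfl⟩
    exact absurd hRs.1 (by decide)
end
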